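/- If c ∈ C_n(X;ℝ) is a singular cycle (∂c = 0), then its symmetrisation is normalised: ∂_j(sym_n(c)) = 0 for every j ∈ {0,...,n}. -/

import Mathlib

open Finset

noncomputable section SingularChains

/-- The affine map `Δ^k → Δ^n` extending the vertex map `π`. -/
def affMap {k n : ℕ} (π : Fin (k + 1) → Fin (n + 1)) :
    C(stdSimplex ℝ (Fin (k + 1)), stdSimplex ℝ (Fin (n + 1))) where
  toFun x := ⟨fun i => ∑ l ∈ Finset.univ.filter (fun l => π l = i), (x : Fin (k + 1) → ℝ) l, by
    constructor
    · intro i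
      exact Finset.sum_nonneg fun l _ => x.2.1 l
    · rw [← x.2.2]
      exact Finset.sum_fiberwise _ _ _⟩
  continuous_toFun := by
    apply Continuous.subtype_mk
    exact continuous_pi fun i =>
      continuous_finset_sum _ fun l _ => (continuous_apply l).comp continuous_subtype_val

variable {X : Type} [TopologicalSpace X]

/-- Singular `n`-simplices in `X`. -/
abbrev Sing (n : ℕ) (X : Type) [TopologicalSpace X] := C(stdSimplex ℝ (Fin (n + 1)), X)

/-- Singular `n`-chains with real coefficients. -/
abbrev Chain (n : ℕ) (X : Type) [TopologicalSpace X] := Sing n X →₀ ℝ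

/-- The `j`-th face map `∂ⱼ : C_{n+1}(X;ℝ) → C_n(X;ℝ)`. -/
def face {n : ℕ} (j : Fin (n + 2)) : Chain (n + 1) X →ₗ[ℝ] Chain n X :=
  Finsupp.lmapDomain ℝ ℝ fun σ => σ.comp (affMap (Fin.succAbove j))

/-- The singular boundary operator `∂ = Σⱼ (-1)ʲ ∂ⱼ`. -/
def bdry (n : ℕ) : Chain (n + 1) X →ₗ[ℝ] Chain n X :=
  ∑ j : Fin (n + 2), ((-1 : ℝ) ^ (j : ℕ)) • face j

/-- The symmetrisation of a singular simplex. -/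
def symSimplex {n : ℕ} (σ : Sing n X) : Chain n X :=
  (((n + 1).factorial : ℝ))⁻¹ •
    ∑ π : Equiv.Perm (Fin (n + 1)),
      ((Equiv.Perm.sign π : ℤ) : ℝ) • Finsupp.single (σ.comp (affMap π)) (1 : ℝ)

/-- The symmetrisation map `sym_n : C_n(X;ℝ) → C_n(X;ℝ)`. -/
def symCh (n : ℕ) : Chain n X →ₗ[ℝ] Chain n X :=
  Finsupp.lsum ℝ fun σ => LinearMap.toSpanSingleton ℝ _ (symSimplex σ)

/-- The ℓ¹-norm of a singular chain. -/
def l1 {n : ℕ} (c : Chain n X) : ℝ := ∑ σ ∈ c.support, |c σ|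

/-- Cycles. -/
def cyc (X : Type) [TopologicalSpace X] : (n : ℕ) → Submodule ℝ (Chain n X)
  | 0 => ⊤
  | n + 1 => LinearMap.ker (bdry n)

/-- Boundaries. -/
def bdries (X : Type) [TopologicalSpace X] (n : ℕ) : Submodule ℝ (Chain n X) :=
  LinearMap.range (bdry n)

/-- A chain is normalised if all but the last face map vanish on it. -/
def IsNormalised : {n : ℕ} → Chain n X → Prop
  | 0, _ => True
  | n + 1, c => ∀ j : Fin (n + 2), j ≠ Fin.last (n + 1) → face j c = 0

/-- The cyclic permutation `τⱼ = (j j-1 ⋯ 1 0)`. -/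
def tau (n : ℕ) (j : Fin (n + 1)) : Equiv.Perm (Fin (n + 1)) := (Fin.cycleRange j)⁻¹

end SingularChains

/-! Every permutation `π` of the vertices of `Δ^{n+1}` satisfies `π ∘ δⱼ = δᵢ ∘ ρ` for a unique
pair of a vertex `i` (namely `π j`) and a permutation `ρ` of the vertices of `Δ^n`, and then
`sgn π = (-1)^(i+j) sgn ρ`. Reindexing the sum defining `∂ⱼ (sym σ)` along this bijection gives
`∂ⱼ ∘ sym = (-1)^j (n+2)⁻¹ • sym ∘ ∂`. -/

open Equiv

lemma affMap_comp_affMap {k m n : ℕ} (f : Fin (m + 1) → Fin (n + 1))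
    (g : Fin (k + 1) → Fin (m + 1)) : (affMap f).comp (affMap g) = affMap (f ∘ g) := by
  ext x i
  change ∑ l ∈ univ.filter (f · = i), ∑ s ∈ univ.filter (g · = l), (x : Fin (k + 1) → ℝ) s
    = ∑ s ∈ univ.filter (fun s => f (g s) = i), (x : Fin (k + 1) → ℝ) s
  rw [sum_fiberwise_eq_sum_filter]
  simp

/-- The permutation of `Fin (n + 2)` sending `j` to `i` and `j.succAbove l` to `i.succAbove (ρ l)`. -/
def permSuccAbove {n : ℕ} (j i : Fin (n + 2)) (ρ : Perm (Fin (n + 1))) : Perm (Fin (n + 2)) :=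
  (Fin.cycleRange i)⁻¹ * Perm.decomposeFin.symm (0, ρ) * Fin.cycleRange j

section permSuccAbove

variable {n : ℕ} (j i : Fin (n + 2)) (ρ : Perm (Fin (n + 1)))

lemma permSuccAbove_apply_self : permSuccAbove j i ρ j = i := by
  simp [permSuccAbove, Fin.cycleRange_self, Perm.decomposeFin_symm_apply_zero]

lemma permSuccAbove_comp_succAbove :
    permSuccAbove j i ρ ∘ j.succAbove = i.succAbove ∘ ρ := by
  ext l
  simp [permSuccAbove, Fin.cycleRange_succAbove, Perm.decomposeFin_symm_apply_succ]

lemma sign_permSuccAbove :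
    Perm.sign (permSuccAbove j i ρ) = (-1) ^ (i : ℕ) * (-1) ^ (j : ℕ) * Perm.sign ρ := by
  simp [permSuccAbove, Fin.sign_cycleRange, Perm.decomposeFin.symm_sign]
  ac_rfl

end permSuccAbove

lemma permSuccAbove_bijective {n : ℕ} (j : Fin (n + 2)) :
    Function.Bijective fun p : Fin (n + 2) × Perm (Fin (n + 1)) => permSuccAbove j p.1 p.2 := by
  rw [Fintype.bijective_iff_injective_and_card]
  refine ⟨?_, by simp [Fintype.card_perm, Nat.factorial_succ]⟩
  rintro ⟨i, ρ⟩ ⟨i', ρ'⟩ h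
  obtain rfl : i = i' := by
    simpa only [permSuccAbove_apply_self] using congr($h j)
  have hρ := congr($h ∘ j.succAbove)
  simp only [permSuccAbove_comp_succAbove] at hρ
  simpa using Perm.ext fun l => Fin.succAbove_right_injective (congr_fun hρ l)

section Chains

variable {X : Type} [TopologicalSpace X]

noncomputable def altSimplex {n : ℕ} (σ : Sing n X) : Chain n X :=
  ∑ π : Perm (Fin (n + 1)), ((Perm.sign π : ℤ) : ℝ) • Finsupp.single (σ.comp (affMap π)) 1

lemma symSimplex_eq_smul_altSimplex {n : ℕ} (σ : Sing n X) :
    symSimplex σ = (((n + 1).factorial : ℝ))⁻¹ • altSimplex σ :=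
  rfl

lemma face_single {n : ℕ} (j : Fin (n + 2)) (σ : Sing (n + 1) X) (r : ℝ) :
    face j (Finsupp.single σ r) = Finsupp.single (σ.comp (affMap j.succAbove)) r :=
  Finsupp.mapDomain_single

lemma bdry_single {n : ℕ} (σ : Sing (n + 1) X) (r : ℝ) :
    bdry n (Finsupp.single σ r)
      = ∑ i : Fin (n + 2), (-1 : ℝ) ^ (i : ℕ) • Finsupp.single (σ.comp (affMap i.succAbove)) r := by
  simp [bdry, face_single]

lemma symCh_single {n : ℕ} (σ : Sing n X) (r : ℝ) :
    symCh n (Finsupp.single σ r) = r • symSimplex σ := by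
  simp [symCh]

lemma face_altSimplex {n : ℕ} (j : Fin (n + 2)) (σ : Sing (n + 1) X) :
    face j (altSimplex σ) = (-1 : ℝ) ^ (j : ℕ) •
      ∑ i : Fin (n + 2), (-1 : ℝ) ^ (i : ℕ) • altSimplex (σ.comp (affMap i.succAbove)) := by
  simp only [altSimplex, map_sum, map_smul, face_single, ContinuousMap.comp_assoc,
    affMap_comp_affMap]
  rw [← (permSuccAbove_bijective j).sum_comp, Fintype.sum_prod_type]
  simp only [permSuccAbove_comp_succAbove, sign_permSuccAbove, smul_sum, smul_smul]
  push_cast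
  refine sum_congr rfl fun i _ => sum_congr rfl fun ρ _ => ?_
  rw [← affMap_comp_affMap, ← ContinuousMap.comp_assoc]
  congr 1
  ring

lemma face_symSimplex {n : ℕ} (j : Fin (n + 2)) (σ : Sing (n + 1) X) :
    face j (symSimplex σ)
      = ((-1 : ℝ) ^ (j : ℕ) * ((n + 2 : ℕ) : ℝ)⁻¹) • symCh n (bdry n (Finsupp.single σ 1)) := by
  simp only [symSimplex_eq_smul_altSimplex, map_smul, face_altSimplex, bdry_single, map_sum, symCh_single,
    smul_sum, smul_smul]
  refine sum_congr rfl fun i _ => congr($(?_) • _)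
  rw [Nat.factorial_succ (n + 1), Nat.cast_mul, mul_inv]
  push_cast
  ring

lemma face_comp_symCh {n : ℕ} (j : Fin (n + 2)) :
    (face (X := X) j).comp (symCh (n + 1))
      = ((-1 : ℝ) ^ (j : ℕ) * ((n + 2 : ℕ) : ℝ)⁻¹) • (symCh n).comp (bdry n) := by
  refine Finsupp.lhom_ext fun σ r => ?_
  rw [← Finsupp.smul_single_one]
  simp only [LinearMap.comp_apply, LinearMap.smul_apply, map_smul, symCh_single, one_smul,
    face_symSimplex, smul_comm r]

end Chains

/-- The symmetrisation of a cycle is normalised: all face maps vanish on it. -/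
theorem face_symm_eq_zero (X : Type) [TopologicalSpace X] (n : ℕ) (c : Chain (n + 1) X)
    (hc : bdry n c = 0) (j : Fin (n + 2)) :
    face j (symCh (n + 1) c) = 0 := by
  simpa [hc] using LinearMap.congr_fun (face_comp_symCh j) c
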